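/- For c ≥ 3, in a minimum genus embedding of K_{c+1}, with d the minimal nonnegative integer such that (c-2)(c-3) + d ≡ 0 (mod 12), the number of faces F_L of size greater than 3 satisfies |F_L| ≤ d/2, and since d ≤ 10 always holds (d is even and 0 ≤ d ≤ 10), there are at most 5 non-triangular faces. -/

import Mathlib

/-- A connected oriented combinatorial embedding of a (multi)graph, given by a
finite set of darts (directed edges), a rotation permutation `σ` (next dart in
the cyclic order around the tail vertex) and a fixed-point-free involution `α`
(dart reversal). -/
structure EmbGraph where
  D : Type
  finD : Finite D
  σ : Equiv.Perm D
  α : Equiv.Perm D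
  α_invol : ∀ d, α (α d) = d
  α_ne : ∀ d, α d ≠ d

namespace EmbGraph

variable (G : EmbGraph)

instance : Finite G.D := G.finD

/-- The setoid identifying darts in a common cycle of a permutation. -/
def sameCycleSetoid (f : Equiv.Perm G.D) : Setoid G.D :=
  ⟨f.SameCycle, ⟨fun _ => Equiv.Perm.SameCycle.refl f _, fun h => h.symm, fun h h' => h.trans h'⟩⟩

/-- The face permutation: the successor of the directed edge `(u,v)` in its
facial walk is the next edge after `(v,u)` in the rotation around `v`. -/
def facePerm : Equiv.Perm G.D := G.σ * G.α

/-- Vertices are the orbits of `σ`. -/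
def Vert := Quotient (G.sameCycleSetoid G.σ)
/-- Edges are the orbits of `α`. -/
def Edge := Quotient (G.sameCycleSetoid G.α)
/-- Faces are the orbits of the face permutation. -/
def Face := Quotient (G.sameCycleSetoid G.facePerm)

/-- The tail vertex of a dart. -/
def vtx (d : G.D) : G.Vert := Quotient.mk (G.sameCycleSetoid G.σ) d
def edgeOf (d : G.D) : G.Edge := Quotient.mk (G.sameCycleSetoid G.α) d
def faceOf (d : G.D) : G.Face := Quotient.mk (G.sameCycleSetoid G.facePerm) d

instance : Finite G.Vert := Quotient.finite _
instance : Finite G.Edge := Quotient.finite _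
instance : Finite G.Face := Quotient.finite _

noncomputable def numVertices : ℕ := Nat.card G.Vert
noncomputable def numEdges : ℕ := Nat.card G.Edge
noncomputable def numFaces : ℕ := Nat.card G.Face

/-- The Euler characteristic `v - e + f`; the genus `g` of the embedding is
defined by `v - e + f = 2 - 2g`. -/
noncomputable def eulerChar : ℤ := (G.numVertices : ℤ) - (G.numEdges : ℤ) + (G.numFaces : ℤ)

/-- The embedded graph is connected. -/
def Connected : Prop :=
  ∀ a b : G.D, Relation.EqvGen (fun x y => y = G.σ x ∨ y = G.α x) a b

/-- The degree of a vertex: the number of darts with this tail. -/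
noncomputable def degree (v : G.Vert) : ℕ := Nat.card {d : G.D // G.vtx d = v}

/-- The size of a face: the number of darts in its facial walk. -/
noncomputable def faceSize (f : G.Face) : ℕ := Nat.card {d : G.D // G.faceOf d = f}

/-- The underlying simple graph of the embedded graph. -/
def underlying : SimpleGraph G.Vert where
  Adj u v := u ≠ v ∧ ∃ d, G.vtx d = u ∧ G.vtx (G.α d) = v
  symm := ⟨by
    rintro u v ⟨huv, d, hd1, hd2⟩
    exact ⟨huv.symm, G.α d, hd2, by rw [G.α_invol]; exact hd1⟩⟩
  loopless := ⟨fun v h => h.1 rfl⟩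

/-- The embedded graph is a simple graph: no loops and no multiple edges. -/
def IsSimple : Prop :=
  (∀ d, G.vtx d ≠ G.vtx (G.α d)) ∧
    ∀ d d', G.vtx d = G.vtx d' → G.vtx (G.α d) = G.vtx (G.α d') → G.edgeOf d = G.edgeOf d'

/-- The dual graph: vertices are the faces of `G`, two faces being adjacent
if they share an edge. -/
def dualGraph : SimpleGraph G.Face where
  Adj f f' := f ≠ f' ∧ ∃ d, G.faceOf d = f ∧ G.faceOf (G.α d) = f'
  symm := ⟨by
    rintro f f' ⟨hff, d, hd1, hd2⟩
    exact ⟨hff.symm, G.α d, hd2, by rw [G.α_invol]; exact hd1⟩⟩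
  loopless := ⟨fun f h => h.1 rfl⟩

/-- The dual (multi)graph is simple: no face shares an edge with itself, and no
two faces share more than one edge. -/
def DualSimple : Prop :=
  (∀ d, G.faceOf d ≠ G.faceOf (G.α d)) ∧
    ∀ d d', G.faceOf d = G.faceOf d' → G.faceOf (G.α d) = G.faceOf (G.α d') →
      G.edgeOf d = G.edgeOf d'

/-- The dual embedded graph. -/
def dualMap : EmbGraph :=
  ⟨G.D, G.finD, G.σ * G.α, G.α, G.α_invol, G.α_ne⟩

/-- Identifying the angle following dart `a` with the angle following dart `b`:
the rotation is composed with the transposition of `a` and `b`. -/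
noncomputable def identifyAngles (a b : G.D) : EmbGraph :=
  letI : DecidableEq G.D := Classical.decEq _
  ⟨G.D, G.finD, G.σ * Equiv.swap a b, G.α, G.α_invol, G.α_ne⟩

/-- The H-operation applied to the edge given by the dart `d = (x,y)`, where
`x` and `y` have degree `3`.  With rotations `y,w',v` around `x` and `x,w,v'`
around `y`, it identifies the angle of `v` preceding `x` with the angle of `v'`
preceding `y`, and the angle of `w` following `y` with the angle of `w'`
following `x`, merging `v` with `v'` and `w` with `w'`. -/
noncomputable def Hop (d : G.D) : EmbGraph :=
  (G.identifyAngles (G.σ⁻¹ (G.α (G.σ (G.σ d)))) (G.σ⁻¹ (G.α (G.σ (G.σ (G.α d)))))).identifyAngles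
    (G.α (G.σ (G.α d))) (G.α (G.σ d))

end EmbGraph

/-- `S` is a vertex cut-set of `H`: deleting `S` leaves two vertices with no
path between them. -/
def IsCutSet {W : Type*} (H : SimpleGraph W) (S : Set W) : Prop :=
  ∃ a b : ↥(Sᶜ), ¬ (H.induce Sᶜ).Reachable a b

/-- `H` is `n`-connected: it has more than `n` vertices and no cut-set with
fewer than `n` vertices. -/
def KConnected {W : Type*} (n : ℕ) (H : SimpleGraph W) : Prop :=
  n < Nat.card W ∧ ∀ S : Set W, S.ncard < n → ¬ IsCutSet H S

/-- The set of genera `s` for which a simple `c`-connected embedded graph of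
genus `s` with a simple dual having a vertex cut of size `k` exists. -/
def deltaSet (k c : ℕ) : Set ℕ :=
  {s | ∃ G : EmbGraph, G.Connected ∧ G.IsSimple ∧ KConnected c G.underlying ∧
      G.eulerChar = 2 - 2 * (s : ℤ) ∧ G.DualSimple ∧
      ∃ S : Set G.Face, S.ncard = k ∧ IsCutSet G.dualGraph S}

/-- `δ_k(c)`: the minimum genus of a simple `c`-connected embedded graph whose
simple dual has a vertex cut of size `k`. -/
noncomputable def delta (k c : ℕ) : ℕ := sInf (deltaSet k c)

/-! Counting darts twice, `2E = c(c+1) = ∑ |f| ≥ 3F + |F_L|`, because in a simple embedded graph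
of minimum degree at least `2` every face has at least three darts. Euler's formula together with
`12g = (c-2)(c-3) + d` gives `3F = c(c+1) - d/2`, hence `|F_L| ≤ d/2`. Finally `d ≤ 11` by
minimality and `d` is even because `(c-2)(c-3)` is, so `d ≤ 10`. -/

theorem Nat.card_eq_sum_card_fiber {A B : Type*} [Finite A] [Fintype B] (f : A → B) :
    Nat.card A = ∑ b, Nat.card {a : A // f a = b} := by
  rw [← Nat.card_sigma, Nat.card_congr (Equiv.sigmaFiberEquiv f)]

theorem SimpleGraph.card_neighborSet_of_iso_top {V W : Type*} [Fintype W] {H : SimpleGraph V}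
    (e : H ≃g (⊤ : SimpleGraph W)) (v : V) : Nat.card (H.neighborSet v) = Fintype.card W - 1 := by
  classical
  have : H.neighborSet v ≃ ({e v}ᶜ : Set W) :=
    e.toEquiv.subtypeEquiv fun u => by simp [← e.map_adj_iff, eq_comm]
  rw [Nat.card_congr this, Nat.card_eq_fintype_card, Fintype.card_compl_set]
  simp

theorem mul_card_add_card_lt_le_sum {ι : Type*} [Fintype ι] (s : ι → ℕ) {k : ℕ} (hk : ∀ i, k ≤ s i) :
    k * Nat.card ι + Nat.card {i // k < s i} ≤ ∑ i, s i := by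
  classical
  calc k * Nat.card ι + Nat.card {i // k < s i}
      = ∑ i, (k + if k < s i then 1 else 0) := by
        simp [Finset.sum_add_distrib, Finset.sum_boole, Nat.card_eq_fintype_card,
          Fintype.card_subtype, mul_comm]
    _ ≤ ∑ i, s i := Finset.sum_le_sum fun i _ => by have := hk i; split <;> omega

theorem le_ten_of_minimal_twelve_dvd {N : ℤ} (hN : Even N) {d : ℕ} (hd : 12 ∣ N + d)
    (hmin : ∀ d' : ℕ, 12 ∣ N + d' → d ≤ d') : d ≤ 10 := by
  have h11 : d ≤ 11 := by
    have := hmin ((-N) % 12).toNat (by omega)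
    omega
  obtain ⟨k, rfl⟩ := hN
  omega

namespace EmbGraph

variable (G : EmbGraph)

theorem vtx_eq_vtx_iff {a b : G.D} : G.vtx a = G.vtx b ↔ G.σ.SameCycle a b :=
  Quotient.eq

theorem edgeOf_eq_edgeOf_iff {a b : G.D} : G.edgeOf a = G.edgeOf b ↔ G.α.SameCycle a b :=
  Quotient.eq

theorem faceOf_eq_faceOf_iff {a b : G.D} :
    G.faceOf a = G.faceOf b ↔ G.facePerm.SameCycle a b :=
  Quotient.eq

theorem sameCycle_α_iff {a b : G.D} : G.α.SameCycle a b ↔ b = a ∨ b = G.α a := by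
  have hsq : G.α ^ 2 = 1 := Equiv.ext G.α_invol
  constructor
  · rintro ⟨i, rfl⟩
    obtain ⟨k, rfl | rfl⟩ := Int.even_or_odd' i
    · simp [zpow_mul, hsq]
    · simp [zpow_add, zpow_mul, hsq]
  · rintro (rfl | rfl)
    exacts [Equiv.Perm.SameCycle.refl _ _, ⟨1, rfl⟩]

theorem edgeOf_eq_edgeOf_iff' {a b : G.D} : G.edgeOf a = G.edgeOf b ↔ b = a ∨ b = G.α a :=
  G.edgeOf_eq_edgeOf_iff.trans G.sameCycle_α_iff

theorem card_edgeOf_fiber (e : G.Edge) : Nat.card {d : G.D // G.edgeOf d = e} = 2 := by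
  obtain ⟨d, rfl⟩ := Quotient.mk_surjective e
  rw [Nat.card_eq_two_iff]
  refine ⟨⟨d, rfl⟩, ⟨G.α d, G.edgeOf_eq_edgeOf_iff'.2 (Or.inr (G.α_invol d).symm)⟩, ?_, ?_⟩
  · exact fun h => G.α_ne d (congrArg Subtype.val h).symm
  · ext ⟨a, ha⟩
    simpa [Subtype.ext_iff] using G.edgeOf_eq_edgeOf_iff'.1 (ha : G.edgeOf a = G.edgeOf d).symm

theorem card_darts_eq_two_mul_numEdges : Nat.card G.D = 2 * G.numEdges := by
  have := Fintype.ofFinite G.Edge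
  rw [Nat.card_eq_sum_card_fiber G.edgeOf]
  simp [card_edgeOf_fiber, numEdges, Nat.card_eq_fintype_card, mul_comm]

theorem card_darts_eq_sum_degree [Fintype G.Vert] : Nat.card G.D = ∑ v, G.degree v :=
  Nat.card_eq_sum_card_fiber G.vtx

theorem card_darts_eq_sum_faceSize [Fintype G.Face] : Nat.card G.D = ∑ f, G.faceSize f :=
  Nat.card_eq_sum_card_fiber G.faceOf

theorem degree_eq_card_neighborSet (hs : G.IsSimple) (v : G.Vert) :
    G.degree v = Nat.card (G.underlying.neighborSet v) := by
  refine Nat.card_eq_of_bijective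
    (fun x => ⟨G.vtx (G.α x.1), fun h => hs.1 x.1 (x.2.trans h), x.1, x.2, rfl⟩) ⟨?_, ?_⟩
  · rintro ⟨a, rfl⟩ ⟨b, hab⟩ h
    have hα : G.vtx (G.α a) = G.vtx (G.α b) := congrArg Subtype.val h
    rcases G.edgeOf_eq_edgeOf_iff'.1 (hs.2 a b hab.symm hα) with rfl | rfl
    · rfl
    · exact absurd hab (hs.1 a).symm
  · rintro ⟨u, -, x, hx, rfl⟩
    exact ⟨⟨x, hx⟩, rfl⟩

theorem σ_ne_self (hdeg : ∀ v, 2 ≤ G.degree v) (x : G.D) : G.σ x ≠ x := by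
  intro hx
  have : Subsingleton {a : G.D // G.vtx a = G.vtx x} := by
    refine ⟨fun ⟨a, ha⟩ ⟨b, hb⟩ => Subtype.ext ?_⟩
    obtain ⟨i, rfl⟩ := (G.vtx_eq_vtx_iff.1 ha).symm
    obtain ⟨j, rfl⟩ := (G.vtx_eq_vtx_iff.1 hb).symm
    simp only [Equiv.Perm.zpow_apply_eq_self_of_apply_eq_self hx]
  have := hdeg (G.vtx x)
  rw [degree, Nat.card_of_subsingleton (⟨x, rfl⟩ : {a : G.D // G.vtx a = G.vtx x})] at this
  omega

theorem facePerm_apply (x : G.D) : G.facePerm x = G.σ (G.α x) := rfl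

theorem vtx_σ (x : G.D) : G.vtx (G.σ x) = G.vtx x :=
  (G.vtx_eq_vtx_iff.2 ⟨1, rfl⟩).symm

theorem facePerm_ne_self (hs : G.IsSimple) (x : G.D) : G.facePerm x ≠ x := by
  intro hx
  exact hs.1 x (by rw [← G.vtx_σ (G.α x), ← facePerm_apply, hx])

/-- A face of length two would be a pair of parallel edges or a vertex of degree one. -/
theorem facePerm_facePerm_ne_self (hs : G.IsSimple) (hdeg : ∀ v, 2 ≤ G.degree v) (x : G.D) :
    G.facePerm (G.facePerm x) ≠ x := by
  set y := G.facePerm x with hy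
  intro hyx
  have h1 : G.vtx x = G.vtx (G.α y) := by rw [← hyx, facePerm_apply, vtx_σ]
  have h2 : G.vtx (G.α x) = G.vtx (G.α (G.α y)) := by rw [G.α_invol, hy, facePerm_apply, vtx_σ]
  rcases G.edgeOf_eq_edgeOf_iff'.1 (hs.2 _ _ h1 h2) with h | h
  · exact G.σ_ne_self hdeg (G.α x) (by rw [← facePerm_apply, ← hy, ← G.α_invol y, h])
  · exact G.facePerm_ne_self hs x (G.α.injective h)

theorem three_le_faceSize (hs : G.IsSimple) (hdeg : ∀ v, 2 ≤ G.degree v) (f : G.Face) :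
    3 ≤ G.faceSize f := by
  obtain ⟨x, rfl⟩ := Quotient.mk_surjective f
  change 3 ≤ Nat.card {a : G.D // G.faceOf a = G.faceOf x}
  have := Fintype.ofFinite {a : G.D // G.faceOf a = G.faceOf x}
  have hmem (n : ℕ) : G.faceOf ((G.facePerm ^ n) x) = G.faceOf x :=
    (G.faceOf_eq_faceOf_iff.2 ⟨n, by simp⟩).symm
  rw [Nat.card_eq_fintype_card, Nat.succ_le_iff, Fintype.two_lt_card_iff]
  refine ⟨⟨x, rfl⟩, ⟨G.facePerm x, hmem 1⟩, ⟨G.facePerm (G.facePerm x), hmem 2⟩, ?_, ?_, ?_⟩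
    <;> refine mt (congrArg Subtype.val) ?_
  · exact (G.facePerm_ne_self hs x).symm
  · exact (G.facePerm_facePerm_ne_self hs hdeg x).symm
  · exact fun h => G.facePerm_ne_self hs _ (G.facePerm.injective h).symm

theorem three_mul_numFaces_add_card_large_faces_le (hs : G.IsSimple)
    (hdeg : ∀ v, 2 ≤ G.degree v) :
    3 * G.numFaces + Nat.card {f : G.Face // 3 < G.faceSize f} ≤ 2 * G.numEdges := by
  have := Fintype.ofFinite G.Face
  rw [← card_darts_eq_two_mul_numEdges, card_darts_eq_sum_faceSize]
  exact mul_card_add_card_lt_le_sum _ (G.three_le_faceSize hs hdeg)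

end EmbGraph

theorem card_large_faces_min_genus_complete_general
    (c : ℕ) (hc : 3 ≤ c) (d g : ℕ)
    (hd : (12 : ℤ) ∣ ((c : ℤ) - 2) * ((c : ℤ) - 3) + (d : ℤ))
    (hdmin : ∀ d' : ℕ, (12 : ℤ) ∣ ((c : ℤ) - 2) * ((c : ℤ) - 3) + (d' : ℤ) → d ≤ d')
    (G : EmbGraph) (hsimple : G.IsSimple)
    (hK : Nonempty (G.underlying ≃g (⊤ : SimpleGraph (Fin (c + 1)))))
    (hming : 12 * (g : ℤ) = ((c : ℤ) - 2) * ((c : ℤ) - 3) + (d : ℤ))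
    (heuler : G.eulerChar = 2 - 2 * (g : ℤ)) :
    d ≤ 10 ∧ 2 * Nat.card {f : G.Face // 3 < G.faceSize f} ≤ d ∧
      Nat.card {f : G.Face // 3 < G.faceSize f} ≤ 5 := by
  obtain ⟨e⟩ := hK
  have hdeg (v : G.Vert) : G.degree v = c := by
    rw [G.degree_eq_card_neighborSet hsimple, SimpleGraph.card_neighborSet_of_iso_top e,
      Fintype.card_fin, Nat.add_sub_cancel]
  have hV : G.numVertices = c + 1 := by
    rw [EmbGraph.numVertices, Nat.card_congr e.toEquiv, Nat.card_fin]
  have hE : 2 * G.numEdges = (c + 1) * c := by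
    have := Fintype.ofFinite G.Vert
    rw [← G.card_darts_eq_two_mul_numEdges, G.card_darts_eq_sum_degree]
    simp [hdeg, ← hV, EmbGraph.numVertices, Nat.card_eq_fintype_card]
  have hF := G.three_mul_numFaces_add_card_large_faces_le hsimple fun v => by rw [hdeg v]; omega
  have h10 : d ≤ 10 := by
    refine le_ten_of_minimal_twelve_dvd ?_ hd hdmin
    convert Int.even_mul_pred_self ((c : ℤ) - 2) using 2
    ring
  have hL : 2 * Nat.card {f : G.Face // 3 < G.faceSize f} ≤ d := by
    have : (G.numVertices : ℤ) - G.numEdges + G.numFaces = 2 - 2 * g := heuler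
    zify at hF hE hV
    linarith
  exact ⟨h10, hL, by omega⟩

/-- in a minimum genus embedding of `K_{c+1}` (`c ≥ 3`), with `d`
minimal such that `(c-2)(c-3) + d ≡ 0 (mod 12)`, we have `d ≤ 10`, the number of
non-triangular faces is at most `d/2`, hence at most `5`. -/
theorem card_large_faces_min_genus_complete
    (c : ℕ) (hc : 3 ≤ c) (d g : ℕ)
    (hd : (12 : ℤ) ∣ ((c : ℤ) - 2) * ((c : ℤ) - 3) + (d : ℤ))
    (hdmin : ∀ d' : ℕ, (12 : ℤ) ∣ ((c : ℤ) - 2) * ((c : ℤ) - 3) + (d' : ℤ) → d ≤ d')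
    (G : EmbGraph) (hconn : G.Connected) (hsimple : G.IsSimple)
    (hK : Nonempty (G.underlying ≃g (⊤ : SimpleGraph (Fin (c + 1)))))
    (hming : 12 * (g : ℤ) = ((c : ℤ) - 2) * ((c : ℤ) - 3) + (d : ℤ))
    (heuler : G.eulerChar = 2 - 2 * (g : ℤ)) :
    d ≤ 10 ∧ 2 * Nat.card {f : G.Face // 3 < G.faceSize f} ≤ d ∧
      Nat.card {f : G.Face // 3 < G.faceSize f} ≤ 5 :=
  card_large_faces_min_genus_complete_general c hc d g hd hdmin G hsimple hK hming heuler
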